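/- (Stability) Under the Parseval condition Σ_{j=0}^J |γ_j(r)|² = 1 for all r, for any f, f' ∈ L²(G): Σ_{m=0}^∞ Σ_{p∈{1,…,J}^m} ‖S[p]f − S[p]f'‖² ≤ ‖f − f'‖². -/

import Mathlib

open scoped BigOperators
open MeasureTheory

noncomputable def conv {G : Type*} [Group G] [Fintype G] (f g : G → ℂ) : G → ℂ :=
  fun x => (Fintype.card G : ℂ)⁻¹ * ∑ y, f y * g (y⁻¹ * x)

noncomputable def nsq {G : Type*} [Fintype G] (f : G → ℂ) : ℝ :=
  (Fintype.card G : ℝ)⁻¹ * ∑ x, Complex.normSq (f x)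

noncomputable def ip {G : Type*} [Fintype G] (f g : G → ℂ) : ℂ :=
  (Fintype.card G : ℂ)⁻¹ * ∑ x, f x * (starRingEnd ℂ) (g x)

noncomputable def gwavelet {G : Type*} [Group G] {k : ℕ} (d : Fin k → ℕ)
    (π : (r : Fin k) → G →* Matrix (Fin (d r)) (Fin (d r)) ℂ)
    (γ : Fin k → ℂ) : G → ℂ :=
  fun x => ∑ r, (d r : ℂ) * γ r * Matrix.trace (π r x)

noncomputable def Upath {G : Type*} [Group G] [Fintype G] {J : ℕ}
    (ψ : Fin J → G → ℂ) : List (Fin J) → (G → ℂ) → G → ℂ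
  | [], f => f
  | j :: p, f => Upath ψ p fun x => ((‖conv (ψ j) f x‖ : ℝ) : ℂ)

noncomputable def Sop {G : Type*} [Group G] [Fintype G] {k J : ℕ} (d : Fin k → ℕ)
    (π : (r : Fin k) → G →* Matrix (Fin (d r)) (Fin (d r)) ℂ)
    (γ : Fin (J + 1) → Fin k → ℂ) (p : List (Fin J)) (f : G → ℂ) : G → ℂ :=
  conv (gwavelet d π (γ 0)) (Upath (fun j => gwavelet d π (γ j.succ)) p f)

/-!
By Schur orthogonality the wavelets `ψ_a = Σ_r d_r a(r) χ_r` multiply under convolution as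
`ψ_a * ψ_b = ψ_{ab}`, and by unitarity the adjoint kernel `ψ̃_a(x) = conj ψ_a(x⁻¹)` is `ψ_{conj a}`.
Hence the frame operator `Σ_j ψ̃_{γ_j} * ψ_{γ_j}` is convolution with `e = ψ_1`, a self-adjoint
idempotent, so `Σ_j ‖ψ_{γ_j} * g‖² = ‖e * g‖² ≤ ‖g‖²`. As the modulus is 1-Lipschitz, the
children `U[j]f, U[j]f'` of a node are no further apart than `ψ_{γ_j} * (f - f')`; induction on
the depth then shows that the outputs `φ * (f - f')` of a node and of all its descendants
together carry at most the energy `‖f - f'‖²`.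
-/

section Convolution
variable {G : Type*} [Group G] [Fintype G]

lemma conv_sub_right (a b c : G → ℂ) : conv a (b - c) = conv a b - conv a c := by
  funext x
  simp only [conv, Pi.sub_apply, mul_sub, Finset.sum_sub_distrib]

lemma conv_sum_left {ι : Type*} [Fintype ι] (F : ι → G → ℂ) (g : G → ℂ) :
    conv (∑ j, F j) g = ∑ j, conv (F j) g := by
  funext x
  simp only [conv, Finset.sum_apply, Finset.sum_mul, Finset.mul_sum]
  exact Finset.sum_comm

lemma conv_assoc (a b c : G → ℂ) : conv a (conv b c) = conv (conv a b) c := by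
  funext x
  have shift : ∀ y, ∑ z, b z * c (z⁻¹ * (y⁻¹ * x)) = ∑ z, b (y⁻¹ * z) * c (z⁻¹ * x) :=
    fun y => Fintype.sum_equiv (Equiv.mulLeft y) _ _ fun z => by simp [mul_assoc]
  simp only [conv, shift, Finset.mul_sum, Finset.sum_mul]
  rw [Finset.sum_comm]
  exact Finset.sum_congr rfl fun _ _ => Finset.sum_congr rfl fun _ _ => by ring

lemma ip_conv_left (a b c : G → ℂ) :
    ip (conv a b) c = ip b (conv (fun x => starRingEnd ℂ (a x⁻¹)) c) := by
  simp only [ip, conv, map_mul, map_inv₀, map_sum, map_natCast, Complex.conj_conj,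
    Finset.mul_sum, Finset.sum_mul]
  rw [Finset.sum_comm]
  refine (Fintype.sum_equiv (Equiv.inv G) _ _ fun y =>
    Fintype.sum_equiv (Equiv.mulLeft y⁻¹) _ _ fun x => ?_).trans Finset.sum_comm
  simp only [Equiv.inv_apply, Equiv.coe_mulLeft, inv_inv, mul_inv_cancel_left]
  ring

end Convolution

section Energy
variable {G : Type*} [Fintype G]

lemma ip_sum_right {ι : Type*} [Fintype ι] (g : G → ℂ) (H : ι → G → ℂ) :
    ip g (∑ j, H j) = ∑ j, ip g (H j) := by
  simp only [ip, Finset.sum_apply, map_sum, Finset.mul_sum]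
  exact Finset.sum_comm

lemma ip_self (g : G → ℂ) : ip g g = nsq g := by
  simp only [ip, nsq, Complex.mul_conj, Complex.ofReal_mul, Complex.ofReal_inv,
    Complex.ofReal_natCast, Complex.ofReal_sum]

lemma nsq_nonneg (g : G → ℂ) : 0 ≤ nsq g :=
  mul_nonneg (by positivity) (Finset.sum_nonneg fun x _ => Complex.normSq_nonneg _)

lemma nsq_le_nsq_of_norm_le {a b : G → ℂ} (h : ∀ x, ‖a x‖ ≤ ‖b x‖) : nsq a ≤ nsq b := by
  refine mul_le_mul_of_nonneg_left (Finset.sum_le_sum fun x _ => ?_) (by positivity)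
  rw [← Complex.sq_norm, ← Complex.sq_norm]
  exact pow_le_pow_left₀ (norm_nonneg _) (h x) 2

lemma nsq_sub (a b : G → ℂ) : nsq (a - b) = nsq a + nsq b - 2 * (ip a b).re := by
  simp only [nsq, ip, Pi.sub_apply, Complex.normSq_sub, Finset.sum_sub_distrib,
    Finset.sum_add_distrib, ← Complex.ofReal_natCast, ← Complex.ofReal_inv, Complex.re_ofReal_mul,
    Complex.re_sum, ← Finset.mul_sum]
  ring

lemma nsq_le_of_ip_eq_nsq {g h : G → ℂ} (hgh : ip g h = nsq h) : nsq h ≤ nsq g := by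
  have := nsq_nonneg (g - h)
  rw [nsq_sub, hgh, Complex.ofReal_re] at this
  linarith

lemma nsq_norm_sub_norm_le (a b : G → ℂ) :
    nsq ((fun x => ((‖a x‖ : ℝ) : ℂ)) - fun x => ((‖b x‖ : ℝ) : ℂ)) ≤ nsq (a - b) :=
  nsq_le_nsq_of_norm_le fun x => by
    simpa [← Complex.ofReal_sub] using abs_norm_sub_norm_le (a x) (b x)

end Energy

lemma Matrix.mul_single_mul_apply {l m n o R : Type*} [Fintype m] [Fintype n] [DecidableEq m]
    [DecidableEq n] [CommSemiring R] (A : Matrix l m R) (B : Matrix n o R) (i : m) (j : n) (c : R)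
    (a : l) (b : o) : (A * Matrix.single i j c * B) a b = A a i * c * B j b := by
  simp [Matrix.mul_apply, Matrix.single_apply, ite_and]

lemma Matrix.trace_mul_trace {m n R : Type*} [Fintype m] [Fintype n] [DecidableEq m]
    [DecidableEq n] [CommSemiring R] (A : Matrix m m R) (B : Matrix n n R) :
    A.trace * B.trace = ∑ i, ∑ j, (A * (Matrix.single i j 1 : Matrix m n R) * B) i j := by
  simp [Matrix.mul_single_mul_apply, Matrix.trace, Finset.sum_mul_sum]

section Schur
variable {G : Type*} [Group G] [Fintype G] {k : ℕ} {d : Fin k → ℕ}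

-- The two halves of Schur's lemma: each `π r` is irreducible, and they are pairwise inequivalent.
def ScalarSelfIntertwiners (π : (r : Fin k) → G →* Matrix (Fin (d r)) (Fin (d r)) ℂ) : Prop :=
  ∀ (r : Fin k) (M : Matrix (Fin (d r)) (Fin (d r)) ℂ),
    (∀ x, M * π r x = π r x * M) → ∃ c : ℂ, M = c • (1 : Matrix (Fin (d r)) (Fin (d r)) ℂ)

def NoCrossIntertwiners (π : (r : Fin k) → G →* Matrix (Fin (d r)) (Fin (d r)) ℂ) : Prop :=
  ∀ (r s : Fin k), r ≠ s → ∀ T : Matrix (Fin (d r)) (Fin (d s)) ℂ,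
    (∀ x, π r x * T = T * π s x) → T = 0

variable {π : (r : Fin k) → G →* Matrix (Fin (d r)) (Fin (d r)) ℂ}

lemma mul_sum_conj (r s : Fin k) (T : Matrix (Fin (d r)) (Fin (d s)) ℂ) (y : G) :
    π r y * ∑ x, π r x * T * π s x⁻¹ = (∑ x, π r x * T * π s x⁻¹) * π s y := by
  rw [Matrix.mul_sum, Matrix.sum_mul]
  refine Fintype.sum_equiv (Equiv.mulLeft y) _ _ fun x => ?_
  simp only [Equiv.coe_mulLeft, mul_inv_rev, map_mul, Matrix.mul_assoc,
    ← map_mul (π s) y⁻¹ y, inv_mul_cancel, map_one, Matrix.mul_one]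

lemma sum_conj_eq_zero (hneq : NoCrossIntertwiners π) {r s : Fin k} (hrs : r ≠ s)
    (T : Matrix (Fin (d r)) (Fin (d s)) ℂ) : ∑ x, π r x * T * π s x⁻¹ = 0 :=
  hneq r s hrs _ (mul_sum_conj r s T)

lemma natCast_smul_sum_conj (hirr : ScalarSelfIntertwiners π) (r : Fin k)
    (T : Matrix (Fin (d r)) (Fin (d r)) ℂ) :
    (d r : ℂ) • ∑ x, π r x * T * π r x⁻¹ = ((Fintype.card G : ℂ) * T.trace) • 1 := by
  obtain ⟨c, hc⟩ := hirr r _ fun y => (mul_sum_conj r r T y).symm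
  have htrace : c * d r = Fintype.card G * T.trace := by
    have := congrArg Matrix.trace hc
    simp only [Matrix.trace_sum, Matrix.trace_mul_cycle, ← map_mul, inv_mul_cancel, map_one,
      Matrix.one_mul, Finset.sum_const, Finset.card_univ, nsmul_eq_mul, Matrix.trace_smul,
      Matrix.trace_one, Fintype.card_fin, smul_eq_mul] at this
    rw [← this]
  rw [hc, smul_smul, mul_comm, htrace]

lemma natCast_mul_sum_trace_mul_trace (hirr : ScalarSelfIntertwiners π)
    (hneq : NoCrossIntertwiners π) (r s : Fin k) (x : G) :
    (d r : ℂ) * ∑ y, (π r y).trace * (π s (y⁻¹ * x)).trace =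
      if r = s then (Fintype.card G : ℂ) * (π r x).trace else 0 := by
  -- Through the matrix units `E_ij`, the sum over `y` becomes one of the averaged intertwiners
  -- `Σ_y π_r(y) E_ij π_s(y⁻¹)`.
  have expand : ∀ y, (π r y).trace * (π s (y⁻¹ * x)).trace = ∑ i, ∑ j,
      (π r y * (Matrix.single i j 1 : Matrix (Fin (d r)) (Fin (d s)) ℂ) * π s y⁻¹ * π s x) i j :=
    fun y => by
      rw [map_mul, Matrix.trace_mul_trace]
      simp only [Matrix.mul_assoc]
  simp only [expand]
  rw [Finset.sum_comm]
  simp only [Finset.sum_comm (γ := G), ← Matrix.sum_apply, ← Matrix.sum_mul]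
  split_ifs with hrs
  · subst hrs
    have entry : ∀ i j, (d r : ℂ) *
        ((∑ y, π r y * (Matrix.single i j 1 : Matrix (Fin (d r)) (Fin (d r)) ℂ) * π r y⁻¹) *
          π r x) i j = if i = j then Fintype.card G * π r x i j else 0 := fun i j => by
      rw [← smul_eq_mul, ← Matrix.smul_apply, ← Matrix.smul_mul, natCast_smul_sum_conj hirr,
        Matrix.smul_mul, Matrix.one_mul, Matrix.smul_apply, smul_eq_mul]
      split_ifs with hij
      · simp [hij]
      · simp [Matrix.trace_single_eq_of_ne i j (1 : ℂ) hij]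
    simp [Finset.mul_sum, entry, Matrix.trace]
  · simp [sum_conj_eq_zero hneq hrs]

end Schur

lemma MonoidHom.trace_map_inv_of_mem_unitaryGroup {G n : Type*} [Group G] [Fintype n]
    [DecidableEq n] (ρ : G →* Matrix n n ℂ) {x : G} (hx : ρ x ∈ Matrix.unitaryGroup n ℂ) :
    (ρ x⁻¹).trace = starRingEnd ℂ (ρ x).trace := by
  have hinv : star (ρ x) = ρ x⁻¹ :=
    left_inv_eq_right_inv (Unitary.star_mul_self_of_mem hx)
      (by rw [← map_mul, mul_inv_cancel, map_one])
  rw [← hinv, Matrix.star_eq_conjTranspose, Matrix.trace_conjTranspose]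
  rfl

section Wavelet
variable {G : Type*} [Group G] {k : ℕ} {d : Fin k → ℕ}
  {π : (r : Fin k) → G →* Matrix (Fin (d r)) (Fin (d r)) ℂ}

lemma gwavelet_sum {ι : Type*} [Fintype ι] (c : ι → Fin k → ℂ) :
    ∑ j, gwavelet d π (c j) = gwavelet d π (∑ j, c j) := by
  funext x
  simp only [gwavelet, Finset.sum_apply, Finset.mul_sum, Finset.sum_mul]
  exact Finset.sum_comm

lemma gwavelet_inv_conj (hunit : ∀ r x, π r x ∈ Matrix.unitaryGroup (Fin (d r)) ℂ)
    (a : Fin k → ℂ) :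
    (fun x => starRingEnd ℂ (gwavelet d π a x⁻¹)) = gwavelet d π (star a) := by
  funext x
  simp [gwavelet, (π _).trace_map_inv_of_mem_unitaryGroup (hunit _ x)]

variable [Fintype G]

lemma conv_gwavelet_gwavelet (hirr : ScalarSelfIntertwiners π) (hneq : NoCrossIntertwiners π)
    (a b : Fin k → ℂ) : conv (gwavelet d π a) (gwavelet d π b) = gwavelet d π (a * b) := by
  funext x
  calc conv (gwavelet d π a) (gwavelet d π b) x
      = (Fintype.card G : ℂ)⁻¹ * ∑ r, ∑ s, a r * (d s * b s) *
          ((d r : ℂ) * ∑ y, (π r y).trace * (π s (y⁻¹ * x)).trace) := by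
        simp only [conv, gwavelet]
        congr 1
        simp only [Finset.sum_mul_sum]
        simp only [Finset.mul_sum]
        rw [Finset.sum_comm]
        refine Finset.sum_congr rfl fun r _ => ?_
        rw [Finset.sum_comm]
        exact Finset.sum_congr rfl fun s _ => Finset.sum_congr rfl fun y _ => by ring
    _ = gwavelet d π (a * b) x := by
        simp only [natCast_mul_sum_trace_mul_trace hirr hneq, mul_ite, mul_zero,
          Finset.sum_ite_eq, Finset.mem_univ, if_true, gwavelet, Pi.mul_apply, Finset.mul_sum]
        refine Finset.sum_congr rfl fun r _ => ?_
        field_simp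

lemma ip_conv_gwavelet_self (hunit : ∀ r x, π r x ∈ Matrix.unitaryGroup (Fin (d r)) ℂ)
    (hirr : ScalarSelfIntertwiners π) (hneq : NoCrossIntertwiners π) (a : Fin k → ℂ)
    (g : G → ℂ) :
    ip (conv (gwavelet d π a) g) (conv (gwavelet d π a) g) =
      ip g (conv (gwavelet d π (star a * a)) g) := by
  rw [ip_conv_left, gwavelet_inv_conj hunit, conv_assoc, conv_gwavelet_gwavelet hirr hneq]

lemma nsq_conv_gwavelet_one_le (hunit : ∀ r x, π r x ∈ Matrix.unitaryGroup (Fin (d r)) ℂ)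
    (hirr : ScalarSelfIntertwiners π) (hneq : NoCrossIntertwiners π) (g : G → ℂ) :
    nsq (conv (gwavelet d π 1) g) ≤ nsq g :=
  nsq_le_of_ip_eq_nsq (by rw [← ip_self, ip_conv_gwavelet_self hunit hirr hneq, star_one, one_mul])

lemma sum_nsq_conv_gwavelet (hunit : ∀ r x, π r x ∈ Matrix.unitaryGroup (Fin (d r)) ℂ)
    (hirr : ScalarSelfIntertwiners π) (hneq : NoCrossIntertwiners π) {ι : Type*} [Fintype ι]
    (γ : ι → Fin k → ℂ) (hγ : ∀ r, ∑ j, Complex.normSq (γ j r) = 1) (g : G → ℂ) :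
    ∑ j, nsq (conv (gwavelet d π (γ j)) g) = nsq (conv (gwavelet d π 1) g) := by
  have hsum : ∑ j, star (γ j) * γ j = star 1 * 1 := by
    funext r
    have := congrArg Complex.ofReal (hγ r)
    push_cast [Complex.normSq_eq_conj_mul_self] at this
    simpa using this
  apply Complex.ofReal_injective
  simp only [Complex.ofReal_sum, ← ip_self, ip_conv_gwavelet_self hunit hirr hneq,
    ← ip_sum_right, ← conv_sum_left, gwavelet_sum, hsum]

end Wavelet

lemma Fintype.sum_ofFn_succ {α M : Type*} [Fintype α] [AddCommMonoid M] (m : ℕ)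
    (F : List α → M) :
    ∑ p : Fin (m + 1) → α, F (List.ofFn p) = ∑ a, ∑ q : Fin m → α, F (a :: List.ofFn q) := by
  rw [← (Fin.consEquiv fun _ => α).sum_comp, Fintype.sum_prod_type]
  simp [Fin.consEquiv, List.ofFn_succ]

lemma sum_range_nsq_conv_Upath_sub_le {G : Type*} [Group G] [Fintype G] {J : ℕ}
    (φ : G → ℂ) (ψ : Fin J → G → ℂ)
    (hframe : ∀ g, nsq (conv φ g) + ∑ j, nsq (conv (ψ j) g) ≤ nsq g) (M : ℕ) (g g' : G → ℂ) :
    ∑ m ∈ Finset.range M, ∑ p : Fin m → Fin J,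
        nsq (conv φ (Upath ψ (List.ofFn p) g - Upath ψ (List.ofFn p) g')) ≤ nsq (g - g') := by
  induction M generalizing g g' with
  | zero => simpa using nsq_nonneg (g - g')
  | succ M ih =>
    have deeper : ∀ j, ∑ m ∈ Finset.range M, ∑ q : Fin m → Fin J,
        nsq (conv φ (Upath ψ (j :: List.ofFn q) g - Upath ψ (j :: List.ofFn q) g')) ≤
          nsq (conv (ψ j) (g - g')) := fun j =>
      (ih _ _).trans (conv_sub_right (ψ j) g g' ▸ nsq_norm_sub_norm_le _ _)
    calc _ = ∑ m ∈ Finset.range M, ∑ j, ∑ q : Fin m → Fin J,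
            nsq (conv φ (Upath ψ (j :: List.ofFn q) g - Upath ψ (j :: List.ofFn q) g')) +
              nsq (conv φ (g - g')) := by
          rw [Finset.sum_range_succ']
          congr 1
          · exact Finset.sum_congr rfl fun m _ =>
              Fintype.sum_ofFn_succ m fun l => nsq (conv φ (Upath ψ l g - Upath ψ l g'))
          · simp [Upath]
      _ = nsq (conv φ (g - g')) + ∑ j, ∑ m ∈ Finset.range M, ∑ q : Fin m → Fin J,
            nsq (conv φ (Upath ψ (j :: List.ofFn q) g - Upath ψ (j :: List.ofFn q) g')) := by
          rw [Finset.sum_comm, add_comm]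
      _ ≤ nsq (conv φ (g - g')) + ∑ j, nsq (conv (ψ j) (g - g')) := by
          gcongr with j
          exact deeper j
      _ ≤ nsq (g - g') := hframe _

theorem stmt11_general {G : Type*} [Group G] [Fintype G]
    {k : ℕ} (d : Fin k → ℕ)
    (π : (r : Fin k) → G →* Matrix (Fin (d r)) (Fin (d r)) ℂ)
    (hunit : ∀ r x, π r x ∈ Matrix.unitaryGroup (Fin (d r)) ℂ)
    (hirr : ∀ (r : Fin k) (M : Matrix (Fin (d r)) (Fin (d r)) ℂ),
      (∀ x, M * π r x = π r x * M) → ∃ c : ℂ, M = c • (1 : Matrix (Fin (d r)) (Fin (d r)) ℂ))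
    (hneq : ∀ (r s : Fin k), r ≠ s → ∀ T : Matrix (Fin (d r)) (Fin (d s)) ℂ,
      (∀ x, π r x * T = T * π s x) → T = 0)
    {J : ℕ} (γ : Fin (J + 1) → Fin k → ℂ)
    (hPar : ∀ r : Fin k, ∑ j : Fin (J + 1), Complex.normSq (γ j r) = 1)
    (f f' : G → ℂ) :
    ∑' m : ℕ, ∑ p : Fin m → Fin J,
        nsq (fun x => Sop d π γ (List.ofFn p) f x - Sop d π γ (List.ofFn p) f' x)
      ≤ nsq (fun x => f x - f' x) := by
  have hframe : ∀ g, nsq (conv (gwavelet d π (γ 0)) g) +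
      ∑ j : Fin J, nsq (conv (gwavelet d π (γ j.succ)) g) ≤ nsq g := fun g => by
    rw [← Fin.sum_univ_succ (fun j => nsq (conv (gwavelet d π (γ j)) g)),
      sum_nsq_conv_gwavelet hunit hirr hneq γ hPar]
    exact nsq_conv_gwavelet_one_le hunit hirr hneq g
  refine Real.tsum_le_of_sum_range_le (fun m => Finset.sum_nonneg fun p _ => nsq_nonneg _)
    fun M => ?_
  simpa only [Sop, ← Pi.sub_apply, ← conv_sub_right] using
    sum_range_nsq_conv_Upath_sub_le _ _ hframe M f f'

theorem stmt11 {G : Type*} [Group G] [Fintype G]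
    {k : ℕ} (d : Fin k → ℕ) (hdpos : ∀ r, 0 < d r)
    (π : (r : Fin k) → G →* Matrix (Fin (d r)) (Fin (d r)) ℂ)
    (hunit : ∀ r x, π r x ∈ Matrix.unitaryGroup (Fin (d r)) ℂ)
    (hirr : ∀ (r : Fin k) (M : Matrix (Fin (d r)) (Fin (d r)) ℂ),
      (∀ x, M * π r x = π r x * M) → ∃ c : ℂ, M = c • (1 : Matrix (Fin (d r)) (Fin (d r)) ℂ))
    (hneq : ∀ (r s : Fin k), r ≠ s → ∀ T : Matrix (Fin (d r)) (Fin (d s)) ℂ,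
      (∀ x, π r x * T = T * π s x) → T = 0)
    (hcard : Nat.card (ConjClasses G) = k)
    {J : ℕ} (γ : Fin (J + 1) → Fin k → ℂ)
    (hPar : ∀ r : Fin k, ∑ j : Fin (J + 1), Complex.normSq (γ j r) = 1)
    (f f' : G → ℂ) :
    ∑' m : ℕ, ∑ p : Fin m → Fin J,
        nsq (fun x => Sop d π γ (List.ofFn p) f x - Sop d π γ (List.ofFn p) f' x)
      ≤ nsq (fun x => f x - f' x) :=
  stmt11_general d π hunit hirr hneq γ hPar f f'
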